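/- Let a ∈ ℝ, let 0 < β̲ ≤ β̄, 0 < η̲ ≤ η̄, ν̄ > 0, and let h : ℝ → ℝ be bounded and measurable. Then the optimal value of ÕPT(𝒫⁺) equals the optimal value of ÕPT(𝒫₃⁺); that is, the supremum of ν̄ E_P[H(X)] over Borel probability measures P on [0, ∞) with μ̲ ≤ E_P[X] ≤ μ̄ and σ̲ ≤ E_P[X²] ≤ σ̄ equals the supremum of the same quantity over such measures supported on at most 3 points. -/

import Mathlib

open MeasureTheory Set Filter Topology

/-- `H(x) = ∫₀ˣ ∫₀ᵘ h(v + a) dv du`. -/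
noncomputable def Hfun (a : ℝ) (h : ℝ → ℝ) (x : ℝ) : ℝ :=
  ∫ u in (0:ℝ)..x, (∫ v in (0:ℝ)..u, h (v + a))

/-- `P` is a Borel probability measure on `[0, ∞)` (modelled as a measure on `ℝ`
concentrated on `[0, ∞)`) with first moment in `[μ̲, μ̄]` and second moment in
`[σ̲, σ̄]`. -/
def RMomFeasible (μl μu σl σu : ℝ) (P : Measure ℝ) : Prop :=
  IsProbabilityMeasure P ∧ P (Set.Iio 0) = 0 ∧
  Integrable (fun x => x) P ∧ Integrable (fun x => x ^ 2) P ∧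
  μl ≤ (∫ x, x ∂P) ∧ (∫ x, x ∂P) ≤ μu ∧
  σl ≤ (∫ x, x ^ 2 ∂P) ∧ (∫ x, x ^ 2 ∂P) ≤ σu

/-- The measure `P` is supported on at most `n` points. -/
def SuppAtMost (n : ℕ) (P : Measure ℝ) : Prop :=
  ∃ s : Finset ℝ, s.card ≤ n ∧ P ((s : Set ℝ)ᶜ) = 0

section proofs

section Hprops

variable {a : ℝ} {h : ℝ → ℝ} {M : ℝ}
  (hmeas : Measurable h) (hM : ∀ x, |h x| ≤ M)

lemma hM_nonneg (hM : ∀ x, |h x| ≤ M) : 0 ≤ M := le_trans (abs_nonneg _) (hM 0)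

lemma h_ii (hmeas : Measurable h) (hM : ∀ x, |h x| ≤ M) (c d : ℝ) :
    IntervalIntegrable (fun v => h (v + a)) volume c d := by
  rw [intervalIntegrable_iff]
  exact Measure.integrableOn_of_bounded (by simp [measure_lt_top])
    ((hmeas.comp (measurable_add_const a)).aestronglyMeasurable)
    (Eventually.of_forall fun x => by simpa using hM (x + a))

/-- the inner primitive -/
noncomputable def gfun (a : ℝ) (h : ℝ → ℝ) (u : ℝ) : ℝ := ∫ v in (0:ℝ)..u, h (v + a)

lemma gfun_bound (hmeas : Measurable h) (hM : ∀ x, |h x| ≤ M) (u : ℝ) :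
    |gfun a h u| ≤ M * |u| := by
  have := intervalIntegral.norm_integral_le_of_norm_le_const
    (f := fun v => h (v + a)) (a := (0:ℝ)) (b := u) (C := M)
    (fun x _ => by simpa using hM (x + a))
  simpa [gfun] using this

lemma gfun_ii (hmeas : Measurable h) (hM : ∀ x, |h x| ≤ M) (c d : ℝ) :
    IntervalIntegrable (gfun a h) volume c d := by
  have hc : Continuous (gfun a h) :=
    intervalIntegral.continuous_primitive (fun c d => h_ii hmeas hM c d) 0
  exact hc.intervalIntegrable c d

lemma Hfun_continuous (hmeas : Measurable h) (hM : ∀ x, |h x| ≤ M) :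
    Continuous (Hfun a h) :=
  intervalIntegral.continuous_primitive (fun c d => gfun_ii hmeas hM c d) 0

lemma Hfun_zero : Hfun a h 0 = 0 := by simp [Hfun]

lemma Hfun_bound (hmeas : Measurable h) (hM : ∀ x, |h x| ≤ M) (x : ℝ) :
    |Hfun a h x| ≤ M * x ^ 2 := by
  have := intervalIntegral.norm_integral_le_of_norm_le_const
    (f := gfun a h) (a := (0:ℝ)) (b := x) (C := M * |x|)
    (fun u hu => by
      have h1 : |u| ≤ |x| := by
        rcases le_or_gt 0 x with hx | hx
        · rw [Set.uIoc_of_le (by linarith : (0:ℝ) ≤ x)] at hu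
          rw [abs_of_pos hu.1, abs_of_nonneg hx]; exact hu.2
        · rw [Set.uIoc_of_ge (by linarith : x ≤ (0:ℝ))] at hu
          rw [abs_of_nonpos hu.2, abs_of_neg hx]
          linarith [hu.1]
      calc ‖gfun a h u‖ ≤ M * |u| := gfun_bound hmeas hM u
        _ ≤ M * |x| := by nlinarith [hM_nonneg hM])
  have h2 : M * |x| * |x - 0| = M * x ^ 2 := by
    rw [sub_zero, mul_assoc, abs_mul_abs_self]; ring
  rw [show Hfun a h x = ∫ u in (0:ℝ)..x, gfun a h u from rfl] at *
  calc |∫ u in (0:ℝ)..x, gfun a h u| ≤ M * |x| * |x - 0| := this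
    _ = M * x ^ 2 := h2

lemma Hfun_lip (hmeas : Measurable h) (hM : ∀ x, |h x| ≤ M) {d x y : ℝ}
    (hx : x ∈ Set.Icc 0 d) (hy : y ∈ Set.Icc 0 d) :
    |Hfun a h x - Hfun a h y| ≤ M * d * |x - y| := by
  have hsub : Hfun a h x - Hfun a h y = ∫ u in y..x, gfun a h u := by
    show (∫ u in (0:ℝ)..x, gfun a h u) - (∫ u in (0:ℝ)..y, gfun a h u) = _
    rw [intervalIntegral.integral_interval_sub_left (gfun_ii hmeas hM 0 x)
      (gfun_ii hmeas hM 0 y)]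
  rw [hsub]
  have := intervalIntegral.norm_integral_le_of_norm_le_const
    (f := gfun a h) (a := y) (b := x) (C := M * d)
    (fun u hu => by
      have h1 : u ∈ Set.Icc 0 d := by
        have := Set.uIoc_subset_uIcc hu
        have h2 : Set.uIcc y x ⊆ Set.Icc 0 d := Set.uIcc_subset_Icc hy hx
        exact h2 this
      calc ‖gfun a h u‖ ≤ M * |u| := gfun_bound hmeas hM u
        _ ≤ M * d := by
          rw [abs_of_nonneg h1.1]
          exact mul_le_mul_of_nonneg_left h1.2 (hM_nonneg hM))
  calc |∫ u in y..x, gfun a h u| ≤ M * d * |x - y| := this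
    _ ≤ M * d * |x - y| := le_refl _


end Hprops

noncomputable def mkMeas (N : ℕ) (x w : Fin N → ℝ) : Measure ℝ :=
  ∑ i : Fin N, ENNReal.ofReal (w i) • Measure.dirac (x i)

lemma integrable_dirac' (f : ℝ → ℝ) (p : ℝ) : Integrable f (Measure.dirac p) := by
  refine (integrable_const (f p)).congr ?_
  rw [MeasureTheory.ae_dirac_eq]
  exact Filter.eventually_pure.mpr rfl

lemma integrable_mkMeas (N : ℕ) (x w : Fin N → ℝ) (f : ℝ → ℝ) :
    Integrable f (mkMeas N x w) := by
  rw [mkMeas]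
  rw [integrable_finset_sum_measure]
  intro i _
  exact (integrable_dirac' f (x i)).smul_measure ENNReal.ofReal_ne_top

lemma integral_mkMeas (N : ℕ) (x w : Fin N → ℝ) (hw : ∀ i, 0 ≤ w i) (f : ℝ → ℝ) :
    ∫ y, f y ∂(mkMeas N x w) = ∑ i : Fin N, w i * f (x i) := by
  rw [mkMeas, integral_finset_sum_measure
    (fun i _ => (integrable_dirac' f (x i)).smul_measure ENNReal.ofReal_ne_top)]
  refine Finset.sum_congr rfl (fun i _ => ?_)
  rw [integral_smul_measure, integral_dirac, ENNReal.toReal_ofReal (hw i), smul_eq_mul]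

lemma mkMeas_apply (N : ℕ) (x w : Fin N → ℝ) {S : Set ℝ} (hS : MeasurableSet S) :
    mkMeas N x w S = ∑ i : Fin N, ENNReal.ofReal (w i) * (Measure.dirac (x i) S) := by
  rw [mkMeas]
  rw [Measure.finset_sum_apply]
  rfl

lemma mkMeas_prob (N : ℕ) (x w : Fin N → ℝ) (hw : ∀ i, 0 ≤ w i)
    (hsum : ∑ i : Fin N, w i = 1) : IsProbabilityMeasure (mkMeas N x w) := by
  constructor
  rw [mkMeas_apply N x w MeasurableSet.univ]
  simp only [measure_univ, mul_one]
  rw [← ENNReal.ofReal_sum_of_nonneg (fun i _ => hw i), hsum, ENNReal.ofReal_one]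

lemma mkMeas_null (N : ℕ) (x w : Fin N → ℝ) {S : Set ℝ} (hS : MeasurableSet S)
    (hx : ∀ i, w i ≠ 0 → x i ∉ S) : mkMeas N x w S = 0 := by
  rw [mkMeas_apply N x w hS]
  refine Finset.sum_eq_zero (fun i _ => ?_)
  by_cases hwi : w i = 0
  · simp [hwi]
  · rw [Measure.dirac_apply' _ hS, Set.indicator_of_notMem (hx i hwi)]
    simp

lemma abs_int_le {μ : Measure ℝ} (f : ℝ → ℝ) : |∫ x, f x ∂μ| ≤ ∫ x, |f x| ∂μ := by
  simpa [Real.norm_eq_abs] using norm_integral_le_integral_norm (μ := μ) f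

noncomputable def cellS (μ : Measure ℝ) : ℝ :=
  if (∫ x, x ∂μ) = 0 then 0 else (∫ x, x ^ 2 ∂μ) / (∫ x, x ∂μ)

noncomputable def cellP (μ : Measure ℝ) : ℝ :=
  if (∫ x, x ^ 2 ∂μ) = 0 then 0 else (∫ x, x ∂μ) ^ 2 / (∫ x, x ^ 2 ∂μ)

section cell

variable {μ : Measure ℝ} [IsFiniteMeasure μ]

lemma cell_cs (hpos : ∀ᵐ x ∂μ, 0 ≤ x)
    (hxi : Integrable (fun x => x) μ) (hx2i : Integrable (fun x => x ^ 2) μ) :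
    (∫ x, x ∂μ) ^ 2 ≤ (μ univ).toReal * ∫ x, x ^ 2 ∂μ := by
  by_cases hW0 : (μ univ).toReal = 0
  · have hμ0 : μ = 0 := by
      rcases (ENNReal.toReal_eq_zero_iff _).mp hW0 with h' | h'
      · exact Measure.measure_univ_eq_zero.mp h'
      · exact absurd h' (measure_ne_top μ univ)
    simp [hμ0]
  · have hWpos : 0 < (μ univ).toReal := lt_of_le_of_ne ENNReal.toReal_nonneg (Ne.symm hW0)
    set W := (μ univ).toReal with hW
    set A := ∫ x, x ∂μ with hA
    set B := ∫ x, x ^ 2 ∂μ with hB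
    set t := A / W with ht
    have i1 : Integrable (fun x => (2 * t) * x) μ := hxi.const_mul _
    have i2 : Integrable (fun x : ℝ => x ^ 2 - (2 * t) * x) μ := hx2i.sub i1
    have key : 0 ≤ ∫ x, (x ^ 2 - (2 * t) * x + t ^ 2) ∂μ := by
      refine integral_nonneg (fun x => ?_)
      have : x ^ 2 - (2 * t) * x + t ^ 2 = (x - t) ^ 2 := by ring
      rw [this]; exact sq_nonneg _
    have expand : ∫ x, (x ^ 2 - (2 * t) * x + t ^ 2) ∂μ = B - 2 * t * A + t ^ 2 * W := by
      rw [integral_add i2 (integrable_const _), integral_sub hx2i i1,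
        integral_const_mul, integral_const]
      simp only [smul_eq_mul, measureReal_def, ← hA, ← hB, ← hW]
      ring
    rw [expand, ht] at key
    have h1 : B - 2 * (A / W) * A + (A / W) ^ 2 * W = B - A ^ 2 / W := by
      field_simp; ring
    rw [h1] at key
    rw [← sub_nonneg]
    have := mul_nonneg key (le_of_lt hWpos)
    calc (0:ℝ) ≤ (B - A ^ 2 / W) * W := this
      _ = W * B - A ^ 2 := by field_simp

lemma cell_A_nonneg (hpos : ∀ᵐ x ∂μ, 0 ≤ x) : 0 ≤ ∫ x, x ∂μ :=
  integral_nonneg_of_ae hpos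

lemma cell_A_zero (hpos : ∀ᵐ x ∂μ, 0 ≤ x) (hxi : Integrable (fun x => x) μ)
    (hA : (∫ x, x ∂μ) = 0) : (fun x : ℝ => x) =ᵐ[μ] 0 :=
  (integral_eq_zero_iff_of_nonneg_ae hpos hxi).mp hA

lemma cell_B_zero_of_A (hpos : ∀ᵐ x ∂μ, 0 ≤ x) (hxi : Integrable (fun x => x) μ)
    (hA : (∫ x, x ∂μ) = 0) : (∫ x, x ^ 2 ∂μ) = 0 := by
  have h0 := cell_A_zero hpos hxi hA
  have : (fun x : ℝ => x ^ 2) =ᵐ[μ] 0 := h0.mono (fun x hx => by simp at hx ⊢; simp [hx])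
  rw [integral_congr_ae this]; simp

lemma cell_A_zero_of_B (hpos : ∀ᵐ x ∂μ, 0 ≤ x)
    (hxi : Integrable (fun x => x) μ) (hx2i : Integrable (fun x => x ^ 2) μ)
    (hB : (∫ x, x ^ 2 ∂μ) = 0) : (∫ x, x ∂μ) = 0 := by
  have := cell_cs hpos hxi hx2i
  rw [hB, mul_zero] at this
  exact pow_eq_zero_iff (n := 2) (by norm_num) |>.mp
    (le_antisymm this (sq_nonneg _))

/-- exact moment representation -/
lemma cell_moments (hpos : ∀ᵐ x ∂μ, 0 ≤ x)
    (hxi : Integrable (fun x => x) μ) (hx2i : Integrable (fun x => x ^ 2) μ) :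
    0 ≤ cellP μ ∧ cellP μ ≤ (μ univ).toReal ∧ 0 ≤ cellS μ ∧
    cellP μ * cellS μ = (∫ x, x ∂μ) ∧ cellP μ * cellS μ ^ 2 = (∫ x, x ^ 2 ∂μ) := by
  have hA : 0 ≤ ∫ x, x ∂μ := cell_A_nonneg hpos
  have hB : 0 ≤ ∫ x, x ^ 2 ∂μ := integral_nonneg (fun x => sq_nonneg _)
  have hcs := cell_cs hpos hxi hx2i
  have hWnn : (0:ℝ) ≤ (μ univ).toReal := ENNReal.toReal_nonneg
  by_cases hB0 : (∫ x, x ^ 2 ∂μ) = 0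
  · have hA0 := cell_A_zero_of_B hpos hxi hx2i hB0
    rw [cellP, cellS]
    simp [hA0, hB0, hWnn]
  · have hBpos : 0 < ∫ x, x ^ 2 ∂μ := lt_of_le_of_ne hB (Ne.symm hB0)
    have hA0 : (∫ x, x ∂μ) ≠ 0 := fun hA0 => hB0 (cell_B_zero_of_A hpos hxi hA0)
    have hApos : 0 < ∫ x, x ∂μ := lt_of_le_of_ne hA (Ne.symm hA0)
    rw [cellP, cellS, if_neg hB0, if_neg hA0]
    refine ⟨by positivity, ?_, by positivity, ?_, ?_⟩
    · rw [div_le_iff₀ hBpos]; exact hcs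
    · field_simp
    · field_simp

lemma cell_value_tail {H : ℝ → ℝ} {M : ℝ} (hMnn : 0 ≤ M)
    (hHb : ∀ x : ℝ, |H x| ≤ M * x ^ 2)
    (hpos : ∀ᵐ x ∂μ, 0 ≤ x)
    (hxi : Integrable (fun x => x) μ) (hx2i : Integrable (fun x => x ^ 2) μ)
    (hHi : Integrable H μ) :
    |(∫ x, H x ∂μ) - cellP μ * H (cellS μ)| ≤ 2 * M * ∫ x, x ^ 2 ∂μ := by
  obtain ⟨hp0, hpW, hs0, hm1, hm2⟩ := cell_moments hpos hxi hx2i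
  have h1 : |∫ x, H x ∂μ| ≤ M * ∫ x, x ^ 2 ∂μ := by
    calc |∫ x, H x ∂μ| ≤ ∫ x, |H x| ∂μ := abs_int_le H
      _ ≤ ∫ x, M * x ^ 2 ∂μ :=
        integral_mono hHi.abs (hx2i.const_mul M) (fun x => hHb x)
      _ = M * ∫ x, x ^ 2 ∂μ := integral_const_mul _ _
  have h2 : |cellP μ * H (cellS μ)| ≤ M * ∫ x, x ^ 2 ∂μ := by
    rw [abs_mul, abs_of_nonneg hp0]
    calc cellP μ * |H (cellS μ)| ≤ cellP μ * (M * (cellS μ) ^ 2) :=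
        mul_le_mul_of_nonneg_left (hHb _) hp0
      _ = M * (cellP μ * (cellS μ) ^ 2) := by ring
      _ = M * ∫ x, x ^ 2 ∂μ := by rw [hm2]
  calc |(∫ x, H x ∂μ) - cellP μ * H (cellS μ)|
      ≤ |∫ x, H x ∂μ| + |cellP μ * H (cellS μ)| := abs_sub _ _
    _ ≤ 2 * M * ∫ x, x ^ 2 ∂μ := by linarith

lemma cell_value_bdd {H : ℝ → ℝ} {M c d : ℝ} (hMnn : 0 ≤ M)
    (hH0 : H 0 = 0) (hHb : ∀ x : ℝ, |H x| ≤ M * x ^ 2)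
    (hHlip : ∀ x y : ℝ, x ∈ Set.Icc 0 d → y ∈ Set.Icc 0 d → |H x - H y| ≤ M * d * |x - y|)
    (hc : 0 ≤ c) (hcd : c ≤ d)
    (hmem : ∀ᵐ x ∂μ, x ∈ Set.Icc c d)
    (hxi : Integrable (fun x => x) μ) (hx2i : Integrable (fun x => x ^ 2) μ)
    (hHi : Integrable H μ) :
    |(∫ x, H x ∂μ) - cellP μ * H (cellS μ)| ≤ 3 * M * d * (d - c) * (μ univ).toReal := by
  have hpos : ∀ᵐ x ∂μ, 0 ≤ x := hmem.mono (fun x hx => le_trans hc hx.1)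
  obtain ⟨hp0, hpW, hs0, hm1, hm2⟩ := cell_moments hpos hxi hx2i
  have hWnn : (0:ℝ) ≤ (μ univ).toReal := ENNReal.toReal_nonneg
  have hd0 : (0:ℝ) ≤ d := le_trans hc hcd
  have hdc0 : (0:ℝ) ≤ d - c := by linarith
  have hRHSnn : 0 ≤ 3 * M * d * (d - c) * (μ univ).toReal := by positivity
  by_cases hA0 : (∫ x, x ∂μ) = 0
  · have hx0 := cell_A_zero hpos hxi hA0
    have hB0 : (∫ x, x ^ 2 ∂μ) = 0 := cell_B_zero_of_A hpos hxi hA0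
    have hH00 : (fun x => H x) =ᵐ[μ] 0 := hx0.mono (fun x hx => by
      simp at hx; simp [hx, hH0])
    have hint0 : ∫ x, H x ∂μ = 0 := by rw [integral_congr_ae hH00]; simp
    have hp00 : cellP μ = 0 := by rw [cellP, if_pos hB0]
    rw [hint0, hp00]
    simpa using hRHSnn
  · have hB0 : (∫ x, x ^ 2 ∂μ) ≠ 0 := fun hb => hA0 (cell_A_zero_of_B hpos hxi hx2i hb)
    have hApos : 0 < ∫ x, x ∂μ := lt_of_le_of_ne (cell_A_nonneg hpos) (Ne.symm hA0)
    have hsdef : cellS μ = (∫ x, x ^ 2 ∂μ) / (∫ x, x ∂μ) := by rw [cellS, if_neg hA0]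
    -- s ∈ [c, d]
    have hBc : c * (∫ x, x ∂μ) ≤ ∫ x, x ^ 2 ∂μ := by
      have h0 : 0 ≤ ∫ x, (x ^ 2 - c * x) ∂μ := by
        refine integral_nonneg_of_ae (hmem.mono (fun x hx => ?_))
        show (0:ℝ) ≤ x ^ 2 - c * x
        nlinarith [hx.1, hc]
      rw [integral_sub hx2i (hxi.const_mul _), integral_const_mul] at h0
      linarith
    have hBd : (∫ x, x ^ 2 ∂μ) ≤ d * ∫ x, x ∂μ := by
      have h0 : 0 ≤ ∫ x, (d * x - x ^ 2) ∂μ := by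
        refine integral_nonneg_of_ae (hmem.mono (fun x hx => ?_))
        show (0:ℝ) ≤ d * x - x ^ 2
        nlinarith [hx.1, hx.2, hc]
      rw [integral_sub (hxi.const_mul _) hx2i, integral_const_mul] at h0
      linarith
    have hsc : c ≤ cellS μ := by rw [hsdef, le_div_iff₀ hApos]; linarith
    have hsd : cellS μ ≤ d := by rw [hsdef, div_le_iff₀ hApos]; linarith
    have hsIcc : cellS μ ∈ Set.Icc 0 d := ⟨le_trans hc hsc, hsd⟩
    have hBcW : c ^ 2 * (μ univ).toReal ≤ ∫ x, x ^ 2 ∂μ := by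
      have h0 : 0 ≤ ∫ x, (x ^ 2 - c ^ 2) ∂μ := by
        refine integral_nonneg_of_ae (hmem.mono (fun x hx => ?_))
        show (0:ℝ) ≤ x ^ 2 - c ^ 2
        nlinarith [hx.1, hc]
      rw [integral_sub hx2i (integrable_const _), integral_const, smul_eq_mul, measureReal_def] at h0
      linarith
    -- abbreviations as opaque variables
    obtain ⟨W, hWdef⟩ : ∃ W, W = (μ univ).toReal := ⟨_, rfl⟩
    obtain ⟨B, hBdef⟩ : ∃ B, B = ∫ x, x ^ 2 ∂μ := ⟨_, rfl⟩
    obtain ⟨s, hs⟩ : ∃ s, s = cellS μ := ⟨_, rfl⟩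
    obtain ⟨p, hp⟩ : ∃ p, p = cellP μ := ⟨_, rfl⟩
    rw [← hs, ← hp, ← hWdef]
    rw [← hWdef] at hpW hWnn hRHSnn hBcW
    rw [← hBdef] at hm2 hBcW
    rw [← hs] at hm2 hsc hsd hsIcc
    rw [← hp] at hp0 hpW hm2
    -- first estimate
    have est1 : |(∫ x, H x ∂μ) - W * H s| ≤ M * d * (d - c) * W := by
      have heq : (∫ x, H x ∂μ) - W * H s = ∫ x, (H x - H s) ∂μ := by
        rw [integral_sub hHi (integrable_const _), integral_const, smul_eq_mul, hWdef, measureReal_def]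
      rw [heq]
      calc |∫ x, (H x - H s) ∂μ| ≤ ∫ x, |H x - H s| ∂μ := abs_int_le _
        _ ≤ ∫ _x, M * d * (d - c) ∂μ := by
            refine integral_mono_ae (hHi.sub (integrable_const _)).abs (integrable_const _)
              (hmem.mono (fun x hx => ?_))
            have hxIcc : x ∈ Set.Icc 0 d := ⟨le_trans hc hx.1, hx.2⟩
            calc |H x - H s| ≤ M * d * |x - s| := hHlip x s hxIcc hsIcc
              _ ≤ M * d * (d - c) := by
                  refine mul_le_mul_of_nonneg_left ?_ (by positivity)
                  rw [abs_sub_le_iff]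
                  constructor <;> linarith [hx.1, hx.2]
        _ = M * d * (d - c) * W := by rw [integral_const, smul_eq_mul, hWdef, measureReal_def]; ring
    -- second estimate
    have est2 : |(W - p) * H s| ≤ 2 * M * d * (d - c) * W := by
      rw [abs_mul, abs_of_nonneg (by linarith : (0:ℝ) ≤ W - p)]
      have hs2d : s ^ 2 ≤ d ^ 2 := by nlinarith [hsIcc.1, hsd]
      calc (W - p) * |H s| ≤ (W - p) * (M * s ^ 2) :=
          mul_le_mul_of_nonneg_left (hHb s) (by linarith)
        _ = M * (W * s ^ 2 - p * s ^ 2) := by ring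
        _ ≤ M * (W * d ^ 2 - c ^ 2 * W) := by
            refine mul_le_mul_of_nonneg_left ?_ hMnn
            have h1 : W * s ^ 2 ≤ W * d ^ 2 := mul_le_mul_of_nonneg_left hs2d hWnn
            nlinarith [hm2, hBcW]
        _ = M * W * (d ^ 2 - c ^ 2) := by ring
        _ ≤ 2 * M * d * (d - c) * W := by nlinarith [mul_nonneg (mul_nonneg hMnn hWnn) (mul_nonneg hdc0 hdc0)]
    calc |(∫ x, H x ∂μ) - p * H s|
        = |((∫ x, H x ∂μ) - W * H s) + (W - p) * H s| := by ring_nf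
      _ ≤ |(∫ x, H x ∂μ) - W * H s| + |(W - p) * H s| := abs_add_le _ _
      _ ≤ M * d * (d - c) * W + 2 * M * d * (d - c) * W := by linarith
      _ = 3 * M * d * (d - c) * W := by ring

end cell

lemma partition_integral (P : Measure ℝ) (hnull : P (Set.Iio 0) = 0)
    {f : ℝ → ℝ} (hf : Integrable f P) (r : ℝ) (hr : 0 < r) :
    ∀ n : ℕ, ∫ x, f x ∂P =
      (∑ k ∈ Finset.range n, ∫ x in Set.Ico ((k:ℝ)*r) (((k:ℝ)+1)*r), f x ∂P)
      + ∫ x in Set.Ici ((n:ℝ)*r), f x ∂P := by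
  intro n
  induction n with
  | zero =>
    simp only [Finset.range_zero, Finset.sum_empty, zero_add, Nat.cast_zero, zero_mul]
    have h0 : ∫ x in Set.Iio 0, f x ∂P = 0 := by
      rw [Measure.restrict_eq_zero.mpr hnull, integral_zero_measure]
    have h1 := integral_add_compl (measurableSet_Iio (a := (0:ℝ))) hf
    rw [compl_Iio] at h1
    rw [← h1, h0, zero_add]
  | succ n ih =>
    rw [ih]
    have hle : (n:ℝ)*r ≤ ((n:ℝ)+1)*r := by nlinarith
    have hsplit : ∫ x in Set.Ici ((n:ℝ)*r), f x ∂P =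
        (∫ x in Set.Ico ((n:ℝ)*r) (((n:ℝ)+1)*r), f x ∂P)
        + ∫ x in Set.Ici (((n:ℝ)+1)*r), f x ∂P := by
      rw [← Set.Ico_union_Ici_eq_Ici hle]
      exact setIntegral_union
        (Set.disjoint_left.mpr (fun x hx1 hx2 => absurd hx2 (not_le.mpr hx1.2)))
        measurableSet_Ici hf.integrableOn hf.integrableOn
    rw [hsplit, Finset.sum_range_succ]
    push_cast
    ring

section lp
variable {N : ℕ}

/-- feasibility of a weight vector -/
def Feas (x : Fin N → ℝ) (μl μu σl σu : ℝ) (v : Fin N → ℝ) : Prop :=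
  (∀ i, 0 ≤ v i) ∧ (∑ i, v i = 1) ∧
  μl ≤ (∑ i, v i * x i) ∧ (∑ i, v i * x i) ≤ μu ∧
  σl ≤ (∑ i, v i * x i ^ 2) ∧ (∑ i, v i * x i ^ 2) ≤ σu

open scoped Classical in
/-- one pivot step -/
lemma lp_step (x c : Fin N → ℝ) (μl μu σl σu : ℝ) (v : Fin N → ℝ)
    (hv : Feas x μl μu σl σu v)
    (hopt : ∀ u, Feas x μl μu σl σu u → ∑ i, u i * c i ≤ ∑ i, v i * c i)
    (hcard : 4 ≤ (Finset.univ.filter (fun i => v i ≠ 0)).card) :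
    ∃ v', Feas x μl μu σl σu v' ∧ (∑ i, v' i * c i) = (∑ i, v i * c i) ∧
      (Finset.univ.filter (fun i => v' i ≠ 0)) ⊂ (Finset.univ.filter (fun i => v i ≠ 0)) := by
  set T : Finset (Fin N) := Finset.univ.filter (fun i => v i ≠ 0) with hT
  -- a kernel direction, supported in T, killing the three moment rows
  have hker : ∃ d : Fin N → ℝ, d ≠ 0 ∧ (∀ i, i ∉ T → d i = 0) ∧
      (∑ i, d i = 0) ∧ (∑ i, d i * x i = 0) ∧ (∑ i, d i * x i ^ 2 = 0) := by
    set r : Fin 3 → (Fin N → ℝ) := ![fun _ => 1, x, fun i => x i ^ 2] with hr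
    set φ : ({i // i ∈ T} → ℝ) →ₗ[ℝ] (Fin 3 → ℝ) :=
      LinearMap.pi (fun k => ∑ j : {i // i ∈ T}, (r k (j : Fin N)) • LinearMap.proj j)
      with hφ
    have hker' : LinearMap.ker φ ≠ ⊥ := by
      intro hbot
      have hinj : Function.Injective φ := LinearMap.ker_eq_bot.mp hbot
      have h1 := LinearMap.finrank_le_finrank_of_injective hinj
      rw [Module.finrank_fintype_fun_eq_card, Module.finrank_fintype_fun_eq_card] at h1
      simp only [Fintype.card_coe, Fintype.card_fin] at h1
      omega
    obtain ⟨u, hu, hu0⟩ := Submodule.exists_mem_ne_zero_of_ne_bot hker'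
    set d : Fin N → ℝ := fun i => if h : i ∈ T then u ⟨i, h⟩ else 0 with hd
    have hdg : ∀ g : Fin N → ℝ, (∑ i, d i * g i) = ∑ j ∈ T.attach, u j * g (j : Fin N) := by
      intro g
      rw [← Finset.sum_subset (Finset.subset_univ T)
        (by intro i _ hi; simp [hd, hi])]
      rw [← Finset.sum_attach T (fun i => d i * g i)]
      refine Finset.sum_congr rfl (fun j _ => ?_)
      simp [hd, j.2]
    have hφk : ∀ k, (∑ j ∈ T.attach, (r k (j : Fin N)) * u j) = 0 := by
      intro k
      have hφu : φ u = 0 := LinearMap.mem_ker.mp hu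
      have := congrFun hφu k
      simpa [hφ, LinearMap.pi_apply, LinearMap.sum_apply, LinearMap.smul_apply,
        LinearMap.proj_apply, smul_eq_mul, Finset.sum_attach] using this
    refine ⟨d, ?_, ?_, ?_, ?_, ?_⟩
    · intro h0
      apply hu0
      funext j
      have := congrFun h0 (j : Fin N)
      simpa [hd, j.2] using this
    · intro i hi; simp [hd, hi]
    · have h1 := hφk 0
      rw [show (∑ i, d i) = ∑ i, d i * (1:ℝ) by simp, hdg]
      rw [← h1]
      refine Finset.sum_congr rfl (fun j _ => ?_)
      simp [hr, mul_comm]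
    · have h1 := hφk 1
      rw [hdg]
      rw [← h1]
      refine Finset.sum_congr rfl (fun j _ => ?_)
      simp [hr, mul_comm]
    · have h1 := hφk 2
      rw [hdg]
      rw [← h1]
      refine Finset.sum_congr rfl (fun j _ => ?_)
      simp [hr]
      ring
  obtain ⟨d₀, hd00, hd0T, hd0s, hd0x, hd0x2⟩ := hker
  -- fix the sign so that the objective does not decrease
  set d : Fin N → ℝ := if 0 ≤ ∑ i, d₀ i * c i then d₀ else -d₀ with hdd
  have hdT : ∀ i, i ∉ T → d i = 0 := by
    intro i hi; by_cases hc0 : 0 ≤ ∑ i, d₀ i * c i <;> simp [hdd, hc0, hd0T i hi]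
  have hdne : d ≠ 0 := by
    by_cases hc0 : 0 ≤ ∑ i, d₀ i * c i <;> simp [hdd, hc0, hd00, neg_eq_zero]
  have hds : ∑ i, d i = 0 := by
    by_cases hc0 : 0 ≤ ∑ i, d₀ i * c i <;>
      simp [hdd, hc0, hd0s, Finset.sum_neg_distrib]
  have hdx : ∑ i, d i * x i = 0 := by
    by_cases hc0 : 0 ≤ ∑ i, d₀ i * c i
    · simp [hdd, hc0, hd0x]
    · simp only [hdd, if_neg hc0, Pi.neg_apply, neg_mul]
      rw [Finset.sum_neg_distrib, hd0x, neg_zero]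
  have hdx2 : ∑ i, d i * x i ^ 2 = 0 := by
    by_cases hc0 : 0 ≤ ∑ i, d₀ i * c i
    · simp [hdd, hc0, hd0x2]
    · simp only [hdd, if_neg hc0, Pi.neg_apply, neg_mul]
      rw [Finset.sum_neg_distrib, hd0x2, neg_zero]
  have hdc : 0 ≤ ∑ i, d i * c i := by
    by_cases hc0 : 0 ≤ ∑ i, d₀ i * c i
    · simpa [hdd, hc0] using hc0
    · push_neg at hc0
      have : ∑ i, (-d₀) i * c i = -∑ i, d₀ i * c i := by
        simp [← Finset.sum_neg_distrib, neg_mul]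
      simp only [hdd, if_neg (not_le.mpr hc0)]
      rw [this]; linarith
  -- there is a negative coordinate of d
  have hneg : ∃ i, d i < 0 := by
    by_contra hno
    push_neg at hno
    apply hdne
    funext i
    have := (Finset.sum_eq_zero_iff_of_nonneg (fun i _ => hno i)).mp hds i (Finset.mem_univ i)
    exact this
  -- the step size
  set Tneg : Finset (Fin N) := Finset.univ.filter (fun i => d i < 0) with hTneg
  have hTnegne : Tneg.Nonempty := by
    obtain ⟨i, hi⟩ := hneg; exact ⟨i, by simp [hTneg, hi]⟩
  obtain ⟨i₀, hi₀mem, hi₀min⟩ :=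
    Tneg.exists_min_image (fun i => v i / (-d i)) hTnegne
  have hi₀neg : d i₀ < 0 := by simpa [hTneg] using hi₀mem
  have hi₀T : i₀ ∈ T := by
    by_contra hiT
    rw [hdT i₀ hiT] at hi₀neg; exact lt_irrefl 0 hi₀neg
  have hvi₀ne : v i₀ ≠ 0 := by simpa [hT] using hi₀T
  have hvi₀pos : 0 < v i₀ := lt_of_le_of_ne (hv.1 i₀) (Ne.symm hvi₀ne)
  set t := v i₀ / (-d i₀) with ht
  have htpos : 0 < t := div_pos hvi₀pos (by linarith)
  set v' : Fin N → ℝ := fun i => v i + t * d i with hv'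
  have hv'nn : ∀ i, 0 ≤ v' i := by
    intro i
    rcases lt_or_ge (d i) 0 with hdi | hdi
    · have hiTn : i ∈ Tneg := by simp [hTneg, hdi]
      have := hi₀min i hiTn
      have h2 : t * (-d i) ≤ (v i / (-d i)) * (-d i) :=
        mul_le_mul_of_nonneg_right this (by linarith)
      rw [div_mul_cancel₀ _ (by linarith : -d i ≠ 0)] at h2
      simp only [hv']; nlinarith
    · have := hv.1 i
      simp only [hv']; nlinarith
  have sum_v' : ∀ g : Fin N → ℝ, (∑ i, v' i * g i) = (∑ i, v i * g i) + t * ∑ i, d i * g i := by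
    intro g
    simp only [hv', add_mul, Finset.sum_add_distrib, mul_assoc, ← Finset.mul_sum]
  have hv'feas : Feas x μl μu σl σu v' := by
    obtain ⟨h0, h1, h2, h3, h4, h5⟩ := hv
    refine ⟨hv'nn, ?_, ?_, ?_, ?_, ?_⟩
    · have := sum_v' (fun _ => 1)
      simp only [mul_one] at this
      rw [this, hds]; simpa using h1
    · rw [sum_v' x, hdx]; simpa using h2
    · rw [sum_v' x, hdx]; simpa using h3
    · rw [sum_v' (fun i => x i ^ 2), hdx2]; simpa using h4
    · rw [sum_v' (fun i => x i ^ 2), hdx2]; simpa using h5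
  -- objective unchanged: first, d·c must vanish
  have hdc0 : ∑ i, d i * c i = 0 := by
    have hle : (∑ i, v' i * c i) ≤ ∑ i, v i * c i := hopt v' hv'feas
    rw [sum_v' c] at hle
    nlinarith
  have hobj : (∑ i, v' i * c i) = ∑ i, v i * c i := by
    rw [sum_v' c, hdc0]; ring
  refine ⟨v', hv'feas, hobj, ?_⟩
  have hsubset : (Finset.univ.filter (fun i => v' i ≠ 0)) ⊆ T := by
    intro i hi
    simp only [Finset.mem_filter, Finset.mem_univ, true_and] at hi
    simp only [hT, Finset.mem_filter, Finset.mem_univ, true_and]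
    intro hvi0
    apply hi
    have hd0 : d i = 0 := hdT i (by simp [hT, hvi0])
    simp [hv', hvi0, hd0]
  have hdine : d i₀ ≠ 0 := ne_of_lt hi₀neg
  have hv'i₀ : v' i₀ = 0 := by
    have hne' : (-d i₀) ≠ 0 := fun h0 => hdine (by linarith)
    show v i₀ + v i₀ / -d i₀ * d i₀ = 0
    have : v i₀ / -d i₀ * d i₀ = -(v i₀) := by
      field_simp
    rw [this]; ring
  refine (Finset.ssubset_iff_of_subset hsubset).mpr ⟨i₀, hi₀T, ?_⟩
  simp [hv'i₀]

theorem lp_reduce (x c : Fin N → ℝ) (μl μu σl σu : ℝ) (w : Fin N → ℝ)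
    (hw : Feas x μl μu σl σu w) :
    ∃ w', Feas x μl μu σl σu w' ∧ (∑ i, w i * c i) ≤ (∑ i, w' i * c i) ∧
      (Finset.univ.filter (fun i => w' i ≠ 0)).card ≤ 3 := by
  classical
  set F : Set (Fin N → ℝ) := {v | Feas x μl μu σl σu v} with hF
  have hsum : ∀ g : Fin N → ℝ, Continuous (fun v : Fin N → ℝ => ∑ i, v i * g i) := by
    intro g
    exact continuous_finset_sum _ (fun i _ => (continuous_apply i).mul continuous_const)
  have hsum1 : Continuous (fun v : Fin N → ℝ => ∑ i, v i) := by
    have := hsum (fun _ => 1)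
    simpa using this
  have hFclosed : IsClosed F := by
    have h0 : IsClosed {v : Fin N → ℝ | ∀ i, 0 ≤ v i} := by
      have : {v : Fin N → ℝ | ∀ i, 0 ≤ v i} = ⋂ i, {v : Fin N → ℝ | 0 ≤ v i} := by
        ext v; simp
      rw [this]
      exact isClosed_iInter (fun i => isClosed_le continuous_const (continuous_apply i))
    have h1 : IsClosed {v : Fin N → ℝ | ∑ i, v i = 1} :=
      isClosed_eq hsum1 continuous_const
    have h2 : IsClosed {v : Fin N → ℝ | μl ≤ ∑ i, v i * x i} :=
      isClosed_le continuous_const (hsum x)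
    have h3 : IsClosed {v : Fin N → ℝ | (∑ i, v i * x i) ≤ μu} :=
      isClosed_le (hsum x) continuous_const
    have h4 : IsClosed {v : Fin N → ℝ | σl ≤ ∑ i, v i * x i ^ 2} :=
      isClosed_le continuous_const (hsum (fun i => x i ^ 2))
    have h5 : IsClosed {v : Fin N → ℝ | (∑ i, v i * x i ^ 2) ≤ σu} :=
      isClosed_le (hsum (fun i => x i ^ 2)) continuous_const
    have : F = {v : Fin N → ℝ | ∀ i, 0 ≤ v i} ∩ ({v | ∑ i, v i = 1} ∩
        ({v | μl ≤ ∑ i, v i * x i} ∩ ({v | (∑ i, v i * x i) ≤ μu} ∩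
        ({v | σl ≤ ∑ i, v i * x i ^ 2} ∩ {v | (∑ i, v i * x i ^ 2) ≤ σu})))) := by
      ext v
      simp only [hF, Set.mem_setOf_eq, Set.mem_inter_iff, Feas]
      try tauto
    rw [this]
    exact h0.inter (h1.inter (h2.inter (h3.inter (h4.inter h5))))
  have hFsub : F ⊆ Set.Icc (0 : Fin N → ℝ) 1 := by
    intro v hv
    obtain ⟨h0, h1, -⟩ := hv
    constructor
    · intro i; exact h0 i
    · intro i
      show v i ≤ 1
      rw [← h1]
      exact Finset.single_le_sum (fun j _ => h0 j) (Finset.mem_univ i)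
  have hFcompact : IsCompact F :=
    IsCompact.of_isClosed_subset isCompact_Icc hFclosed hFsub
  obtain ⟨v, hvF, hvmax⟩ := hFcompact.exists_isMaxOn ⟨w, hw⟩ (hsum c).continuousOn
  -- reduce the support by induction
  have main : ∀ n : ℕ, ∀ v : Fin N → ℝ, Feas x μl μu σl σu v →
      (∀ u, Feas x μl μu σl σu u → (∑ i, u i * c i) ≤ ∑ i, v i * c i) →
      (Finset.univ.filter (fun i => v i ≠ 0)).card ≤ n →
      ∃ w', Feas x μl μu σl σu w' ∧ (∑ i, v i * c i) ≤ (∑ i, w' i * c i) ∧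
        (Finset.univ.filter (fun i => w' i ≠ 0)).card ≤ 3 := by
    intro n
    induction n with
    | zero => exact fun v hv _ hcard => ⟨v, hv, le_refl _, le_trans hcard (by norm_num)⟩
    | succ n ih =>
      intro v hv hopt hcard
      by_cases hle : (Finset.univ.filter (fun i => v i ≠ 0)).card ≤ 3
      · exact ⟨v, hv, le_refl _, hle⟩
      · push_neg at hle
        obtain ⟨v', hv'feas, hv'obj, hv'ss⟩ :=
          lp_step x c μl μu σl σu v hv hopt (by omega)
        have hcard' : (Finset.univ.filter (fun i => v' i ≠ 0)).card ≤ n := by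
          have := Finset.card_lt_card hv'ss
          omega
        obtain ⟨w', hw1, hw2, hw3⟩ := ih v' hv'feas
          (fun u hu => le_trans (hopt u hu) (le_of_eq hv'obj.symm)) hcard'
        exact ⟨w', hw1, le_trans (le_of_eq hv'obj.symm) hw2, hw3⟩
  obtain ⟨w', hw1, hw2, hw3⟩ := main ((Finset.univ.filter (fun i => v i ≠ 0)).card)
    v hvF (fun u hu => hvmax hu) (le_refl _)
  exact ⟨w', hw1, le_trans (hvmax hw) hw2, hw3⟩
end lp
section discretize

variable {P : Measure ℝ} [IsProbabilityMeasure P]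

lemma P_ae_nonneg (hnull : P (Set.Iio 0) = 0) : ∀ᵐ x ∂P, 0 ≤ x := by
  rw [ae_iff]
  convert hnull using 2
  ext y
  simp [not_le]

lemma tail_small (hnull : P (Set.Iio 0) = 0) (hx2i : Integrable (fun x : ℝ => x ^ 2) P)
    {δ : ℝ} (hδ : 0 < δ) : ∃ m : ℕ, ∫ x in Set.Ici (m:ℝ), x ^ 2 ∂P < δ := by
  have hmono : Monotone (fun i : ℕ => Set.Iio (i:ℝ)) := by
    intro i j hij
    exact Set.Iio_subset_Iio (by exact_mod_cast hij)
  have hunion : (⋃ i : ℕ, Set.Iio (i:ℝ)) = Set.univ := by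
    ext y
    simp only [Set.mem_iUnion, Set.mem_Iio, Set.mem_univ, iff_true]
    exact exists_nat_gt y
  have htendsto : Tendsto (fun i : ℕ => ∫ x in Set.Iio (i:ℝ), x ^ 2 ∂P) atTop
      (𝓝 (∫ x in ⋃ i : ℕ, Set.Iio (i:ℝ), x ^ 2 ∂P)) := by
    refine tendsto_setIntegral_of_monotone (fun i => measurableSet_Iio) hmono ?_
    rw [hunion]
    exact hx2i.integrableOn
  rw [hunion] at htendsto
  simp only [Measure.restrict_univ] at htendsto
  have heq : ∀ i : ℕ, ∫ x in Set.Ici (i:ℝ), x ^ 2 ∂P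
      = (∫ x, x ^ 2 ∂P) - ∫ x in Set.Iio (i:ℝ), x ^ 2 ∂P := by
    intro i
    have h1 := integral_add_compl (measurableSet_Iio (a := (i:ℝ))) hx2i
    rw [compl_Iio] at h1
    linarith
  have h0 : Tendsto (fun i : ℕ => ∫ x in Set.Ici (i:ℝ), x ^ 2 ∂P) atTop (𝓝 0) := by
    simp only [heq]
    have := tendsto_const_nhds (x := ∫ x, x ^ 2 ∂P) (f := atTop (α := ℕ)) |>.sub htendsto
    simpa using this
  exact (h0.eventually (gt_mem_nhds hδ)).exists



set_option maxHeartbeats 2000000 in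
lemma discretize {P : Measure ℝ} [IsProbabilityMeasure P] (hnull : P (Set.Iio 0) = 0)
    (hxi : Integrable (fun x : ℝ => x) P) (hx2i : Integrable (fun x : ℝ => x ^ 2) P)
    {H : ℝ → ℝ} {M : ℝ} (hMnn : 0 ≤ M) (hH0 : H 0 = 0)
    (hHb : ∀ x : ℝ, |H x| ≤ M * x ^ 2)
    (hHlip : ∀ d : ℝ, 0 ≤ d → ∀ x y : ℝ, x ∈ Set.Icc 0 d → y ∈ Set.Icc 0 d →
      |H x - H y| ≤ M * d * |x - y|)
    (hHi : Integrable H P)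
    {ε : ℝ} (hε : 0 < ε) :
    ∃ (N : ℕ) (xq wq : Fin N → ℝ), (∀ i, 0 ≤ xq i) ∧ (∀ i, 0 ≤ wq i) ∧
      (∑ i, wq i = 1) ∧ (∑ i, wq i * xq i = ∫ x, x ∂P) ∧
      (∑ i, wq i * xq i ^ 2 = ∫ x, x ^ 2 ∂P) ∧
      (∫ x, H x ∂P) - ε ≤ ∑ i, wq i * H (xq i) := by
  classical
  have haepos : ∀ᵐ x ∂P, 0 ≤ x := P_ae_nonneg hnull
  set m1 := ∫ x, x ∂P with hm1
  have hm1nn : 0 ≤ m1 := integral_nonneg_of_ae haepos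
  obtain ⟨m, hm⟩ := tail_small hnull hx2i (δ := ε / (4 * (M + 1))) (by positivity)
  obtain ⟨q0, hq0⟩ := exists_nat_ge (6 * M * (m1 + 1) / ε)
  set q : ℕ := q0 + 1 with hqdef
  have hqpos : 0 < (q:ℝ) := by
    have : 0 < q := Nat.succ_pos q0
    exact_mod_cast this
  set r : ℝ := 1 / (q:ℝ) with hrdef
  have hr : 0 < r := by positivity
  have hrq : (q:ℝ) * r = 1 := by rw [hrdef]; field_simp
  have hr1 : r ≤ 1 := by
    rw [hrdef]
    rw [div_le_one hqpos]
    have : (1:ℕ) ≤ q := Nat.succ_le_succ (Nat.zero_le q0)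
    exact_mod_cast this
  set n : ℕ := m * q with hndef
  have hnr : (n:ℝ) * r = (m:ℝ) := by
    rw [hndef, hrdef]; push_cast; field_simp
  set cell : ℕ → Set ℝ := fun k => Set.Ico ((k:ℝ)*r) (((k:ℝ)+1)*r) with hcell
  set tl : Set ℝ := Set.Ici ((n:ℝ)*r) with htl
  have hcellmem : ∀ k : ℕ, ∀ᵐ x ∂(P.restrict (cell k)),
      x ∈ Set.Icc ((k:ℝ)*r) (((k:ℝ)+1)*r) :=
    fun k => (ae_restrict_mem measurableSet_Ico).mono (fun x hx => ⟨hx.1, le_of_lt hx.2⟩)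
  have hcellpos : ∀ k : ℕ, ∀ᵐ x ∂(P.restrict (cell k)), 0 ≤ x :=
    fun k => (hcellmem k).mono (fun x hx => le_trans (by positivity) hx.1)
  have htailpos : ∀ᵐ x ∂(P.restrict tl), 0 ≤ x :=
    (ae_restrict_mem measurableSet_Ici).mono (fun x hx => le_trans (by positivity) hx)
  set W : ℕ → ℝ := fun k => ((P.restrict (cell k)) Set.univ).toReal with hW
  set Wt : ℝ := ((P.restrict tl) Set.univ).toReal with hWt
  set p : ℕ → ℝ := fun k => cellP (P.restrict (cell k)) with hp
  set s : ℕ → ℝ := fun k => cellS (P.restrict (cell k)) with hs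
  set pt : ℝ := cellP (P.restrict tl) with hpt
  set st : ℝ := cellS (P.restrict tl) with hst
  have hmom : ∀ k : ℕ, 0 ≤ p k ∧ p k ≤ W k ∧ 0 ≤ s k ∧
      p k * s k = (∫ x, x ∂(P.restrict (cell k))) ∧
      p k * (s k) ^ 2 = ∫ x, x ^ 2 ∂(P.restrict (cell k)) :=
    fun k => cell_moments (hcellpos k) hxi.restrict hx2i.restrict
  have hmomt : 0 ≤ pt ∧ pt ≤ Wt ∧ 0 ≤ st ∧
      pt * st = (∫ x, x ∂(P.restrict tl)) ∧ pt * st ^ 2 = ∫ x, x ^ 2 ∂(P.restrict tl) :=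
    cell_moments htailpos hxi.restrict hx2i.restrict
  -- mass identity
  have hone : (1:ℝ) = (∑ k ∈ Finset.range n, W k) + Wt := by
    have h1 := partition_integral P hnull (f := fun _ => (1:ℝ)) (integrable_const _) r hr n
    simp only [integral_const, smul_eq_mul, mul_one, measureReal_def, measure_univ, ENNReal.toReal_one] at h1
    rw [h1]
  -- moment identities
  have hmoment1 : m1 = (∑ k ∈ Finset.range n, p k * s k) + pt * st := by
    rw [hm1, partition_integral P hnull hxi r hr n]
    congr 1
    · exact Finset.sum_congr rfl (fun k _ => ((hmom k).2.2.2.1).symm)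
    · exact (hmomt.2.2.2.1).symm
  have hmoment2 : (∫ x, x ^ 2 ∂P) = (∑ k ∈ Finset.range n, p k * (s k) ^ 2) + pt * st ^ 2 := by
    rw [partition_integral P hnull hx2i r hr n]
    congr 1
    · exact Finset.sum_congr rfl (fun k _ => ((hmom k).2.2.2.2).symm)
    · exact (hmomt.2.2.2.2).symm
  -- per-cell value bounds
  have hcellvalbd : ∀ k : ℕ, |(∫ x, H x ∂(P.restrict (cell k))) - p k * H (s k)|
      ≤ 3 * M * (((k:ℝ)+1)*r) * r * W k := by
    intro k
    have h0c : (0:ℝ) ≤ (k:ℝ)*r := by positivity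
    have hcd : (k:ℝ)*r ≤ ((k:ℝ)+1)*r := by nlinarith
    have hthis := cell_value_bdd (μ := P.restrict (cell k)) hMnn hH0 hHb
      (hHlip (((k:ℝ)+1)*r) (by positivity)) h0c hcd (hcellmem k)
      hxi.restrict hx2i.restrict hHi.restrict
    have heq : 3 * M * (((k:ℝ)+1)*r) * ((((k:ℝ)+1)*r) - ((k:ℝ)*r)) * W k
        = 3 * M * (((k:ℝ)+1)*r) * r * W k := by ring
    rw [← heq]
    exact hthis
  have htailvalbd : |(∫ x, H x ∂(P.restrict tl)) - pt * H st|
      ≤ 2 * M * ∫ x, x ^ 2 ∂(P.restrict tl) :=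
    cell_value_tail hMnn hHb htailpos hxi.restrict hx2i.restrict hHi.restrict
  have htail2 : (∫ x, x ^ 2 ∂(P.restrict tl)) < ε / (4 * (M+1)) := by
    have : tl = Set.Ici ((m:ℝ)) := by rw [htl, hnr]
    rw [this]
    exact hm
  have htail2nn : 0 ≤ ∫ x, x ^ 2 ∂(P.restrict tl) := integral_nonneg (fun x => sq_nonneg _)
  -- bounds on weight sums
  have hkrW : ∀ k : ℕ, (k:ℝ) * r * W k ≤ ∫ x, x ∂(P.restrict (cell k)) := by
    intro k
    have h1 : ∫ _x, ((k:ℝ)*r) ∂(P.restrict (cell k)) ≤ ∫ x, x ∂(P.restrict (cell k)) :=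
      integral_mono_ae (integrable_const _) hxi.restrict ((hcellmem k).mono (fun x hx => hx.1))
    rw [integral_const, smul_eq_mul] at h1
    calc (k:ℝ) * r * W k = W k * ((k:ℝ)*r) := by ring
      _ ≤ _ := h1
  have hsumA : (∑ k ∈ Finset.range n, ∫ x, x ∂(P.restrict (cell k))) ≤ m1 := by
    have hpi := partition_integral P hnull hxi r hr n
    have htA : 0 ≤ ∫ x, x ∂(P.restrict tl) := integral_nonneg_of_ae htailpos
    rw [hm1, hpi]
    linarith
  have hWnn : ∀ k, 0 ≤ W k := fun k => ENNReal.toReal_nonneg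
  have hWtnn : 0 ≤ Wt := ENNReal.toReal_nonneg
  have hsumW : (∑ k ∈ Finset.range n, W k) ≤ 1 := by linarith [hone, hWtnn]
  -- total error bound
  have herr : (∑ k ∈ Finset.range n, 3 * M * (((k:ℝ)+1)*r) * r * W k)
      + 2 * M * (∫ x, x ^ 2 ∂(P.restrict tl)) ≤ ε := by
    have h2 : ∑ k ∈ Finset.range n, 3 * M * (((k:ℝ)+1)*r) * r * W k
        = 3 * M * r * ∑ k ∈ Finset.range n, (((k:ℝ)*r) * W k + r * W k) := by
      rw [Finset.mul_sum]
      exact Finset.sum_congr rfl (fun k _ => by ring)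
    have h3 : (∑ k ∈ Finset.range n, (((k:ℝ)*r) * W k + r * W k)) ≤ m1 + r := by
      rw [Finset.sum_add_distrib]
      have ha : (∑ k ∈ Finset.range n, ((k:ℝ)*r) * W k) ≤ m1 :=
        le_trans (Finset.sum_le_sum (fun k _ => hkrW k)) hsumA
      have hb : (∑ k ∈ Finset.range n, r * W k) ≤ r := by
        rw [← Finset.mul_sum]
        nlinarith [hsumW, Finset.sum_nonneg (fun k (_ : k ∈ Finset.range n) => hWnn k)]
      linarith
    have hkey : 3 * M * r * (m1 + r) ≤ ε / 2 := by
      have hcast : (q0:ℝ) ≤ (q:ℝ) := by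
        have : q0 ≤ q := Nat.le_succ q0
        exact_mod_cast this
      have h6 : 6 * M * (m1 + 1) ≤ ε * (q:ℝ) := by
        have h7 := (div_le_iff₀ hε).mp hq0
        nlinarith
      have h8 : 6 * M * (m1 + 1) * r ≤ ε * ((q:ℝ) * r) := by
        have h8' := mul_le_mul_of_nonneg_right h6 (le_of_lt hr)
        nlinarith [h8']
      rw [hrq, mul_one] at h8
      have h9 : 3 * M * r * (m1 + r) ≤ 3 * M * r * (m1 + 1) := by
        nlinarith [mul_nonneg (mul_nonneg (by linarith : (0:ℝ) ≤ 3*M) hr.le)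
          (by linarith : (0:ℝ) ≤ 1 - r)]
      nlinarith [h8, h9]
    have hkey2 : 2 * M * (ε / (4*(M+1))) ≤ ε / 2 := by
      have h10 : 2 * M * (ε / (4*(M+1))) = (2*M*ε) / (4*(M+1)) := by ring
      rw [h10, div_le_iff₀ (by positivity : (0:ℝ) < 4*(M+1))]
      nlinarith [hε.le, hMnn]
    have hmono3 : 3 * M * r * (∑ k ∈ Finset.range n, (((k:ℝ)*r) * W k + r * W k))
        ≤ 3 * M * r * (m1 + r) := by
      apply mul_le_mul_of_nonneg_left h3 (by positivity)
    have htm : 2 * M * (∫ x, x ^ 2 ∂(P.restrict tl)) ≤ 2 * M * (ε / (4*(M+1))) := by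
      apply mul_le_mul_of_nonneg_left htail2.le (by positivity)
    rw [h2]
    linarith
  -- the discrete candidate
  set wlast : ℝ := 1 - ((∑ k ∈ Finset.range n, p k) + pt) with hwlast
  set wnat : ℕ → ℝ := fun k => if k < n then p k else if k = n then pt else wlast with hwnat
  set xnat : ℕ → ℝ := fun k => if k < n then s k else if k = n then st else 0 with hxnat
  have hwlastnn : 0 ≤ wlast := by
    rw [hwlast]
    have h1 : (∑ k ∈ Finset.range n, p k) ≤ ∑ k ∈ Finset.range n, W k :=
      Finset.sum_le_sum (fun k _ => (hmom k).2.1)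
    have h2 : pt ≤ Wt := hmomt.2.1
    linarith [hone]
  have hsplit : ∀ g : ℝ → ℝ, (∑ i : Fin (n+2), wnat (i:ℕ) * g (xnat (i:ℕ)))
      = (∑ k ∈ Finset.range n, p k * g (s k)) + pt * g st + wlast * g 0 := by
    intro g
    rw [Fin.sum_univ_eq_sum_range (fun k => wnat k * g (xnat k)) (n+2)]
    rw [Finset.sum_range_succ, Finset.sum_range_succ]
    congr 1
    · congr 1
      · refine Finset.sum_congr rfl (fun k hk => ?_)
        have hkn : k < n := Finset.mem_range.mp hk
        simp [hwnat, hxnat, hkn]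
      · simp [hwnat, hxnat, lt_irrefl]
    · have h1 : ¬(n + 1 < n) := by omega
      have h2 : ¬(n + 1 = n) := by omega
      simp [hwnat, hxnat, h1, h2]
  refine ⟨n + 2, fun i => xnat (i:ℕ), fun i => wnat (i:ℕ), ?_, ?_, ?_, ?_, ?_, ?_⟩
  · intro i
    show 0 ≤ xnat (i:ℕ)
    simp only [hxnat]
    split_ifs with h1 h2
    · exact (hmom _).2.2.1
    · exact hmomt.2.2.1
    · exact le_refl 0
  · intro i
    show 0 ≤ wnat (i:ℕ)
    simp only [hwnat]
    split_ifs with h1 h2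
    · exact (hmom _).1
    · exact hmomt.1
    · exact hwlastnn
  · have h1 := hsplit (fun _ => 1)
    simp only [mul_one] at h1
    show (∑ i : Fin (n+2), wnat (i:ℕ)) = 1
    rw [h1, hwlast]
    ring
  · have h1 := hsplit (fun y => y)
    show (∑ i : Fin (n+2), wnat (i:ℕ) * xnat (i:ℕ)) = m1
    rw [h1, hmoment1]
    ring
  · have h1 := hsplit (fun y => y ^ 2)
    show (∑ i : Fin (n+2), wnat (i:ℕ) * (xnat (i:ℕ)) ^ 2) = ∫ x, x ^ 2 ∂P
    rw [h1, hmoment2]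
    simp
  · have h1 := hsplit H
    show (∫ x, H x ∂P) - ε ≤ ∑ i : Fin (n+2), wnat (i:ℕ) * H (xnat (i:ℕ))
    rw [h1, hH0, mul_zero, add_zero]
    have hvalue : (∫ x, H x ∂P) - ((∑ k ∈ Finset.range n, p k * H (s k)) + pt * H st) =
        (∑ k ∈ Finset.range n, ((∫ x, H x ∂(P.restrict (cell k))) - p k * H (s k)))
        + ((∫ x, H x ∂(P.restrict tl)) - pt * H st) := by
      rw [partition_integral P hnull hHi r hr n, Finset.sum_sub_distrib]
      ring
    have habs : |(∫ x, H x ∂P) - ((∑ k ∈ Finset.range n, p k * H (s k)) + pt * H st)| ≤ ε := by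
      rw [hvalue]
      calc |(∑ k ∈ Finset.range n, ((∫ x, H x ∂(P.restrict (cell k))) - p k * H (s k)))
            + ((∫ x, H x ∂(P.restrict tl)) - pt * H st)|
          ≤ |∑ k ∈ Finset.range n, ((∫ x, H x ∂(P.restrict (cell k))) - p k * H (s k))|
            + |(∫ x, H x ∂(P.restrict tl)) - pt * H st| := abs_add_le _ _
        _ ≤ (∑ k ∈ Finset.range n, |(∫ x, H x ∂(P.restrict (cell k))) - p k * H (s k)|)
            + |(∫ x, H x ∂(P.restrict tl)) - pt * H st| := by
            gcongr
            exact Finset.abs_sum_le_sum_abs _ _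
        _ ≤ (∑ k ∈ Finset.range n, 3 * M * (((k:ℝ)+1)*r) * r * W k)
            + 2 * M * (∫ x, x ^ 2 ∂(P.restrict tl)) := by
            exact add_le_add (Finset.sum_le_sum (fun k _ => hcellvalbd k)) htailvalbd
        _ ≤ ε := herr
    have := abs_le.mp habs
    linarith [this.1]


end discretize

section assembly

variable {a : ℝ} {h : ℝ → ℝ} {M : ℝ} {μl μu σl σu ν : ℝ}

/-- from a feasible measure, a feasible 3-point measure almost reaching its value -/
lemma three_point_approx (hmeas : Measurable h) (hM : ∀ x, |h x| ≤ M)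
    {P : Measure ℝ} (hP : RMomFeasible μl μu σl σu P)
    {ε : ℝ} (hε : 0 < ε) :
    ∃ Q : Measure ℝ, RMomFeasible μl μu σl σu Q ∧ SuppAtMost 3 Q ∧
      (∫ x, Hfun a h x ∂P) - ε ≤ ∫ x, Hfun a h x ∂Q := by
  classical
  obtain ⟨hprob, hnull, hxi, hx2i, h1l, h1u, h2l, h2u⟩ := hP
  have hM0 : 0 ≤ M := hM_nonneg hM
  have hHi : Integrable (Hfun a h) P := by
    refine Integrable.mono (hx2i.const_mul M)
      (Hfun_continuous hmeas hM).aestronglyMeasurable (Eventually.of_forall (fun x => ?_))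
    rw [Real.norm_eq_abs, Real.norm_eq_abs]
    exact le_trans (Hfun_bound hmeas hM x) (le_abs_self _)
  obtain ⟨N, xq, wq, hxqnn, hwqnn, hwsum, hmom1, hmom2, hval⟩ :=
    discretize hnull hxi hx2i hM0 (Hfun_zero (a := a) (h := h))
      (fun x => Hfun_bound hmeas hM x)
      (fun d _hd x y hx hy => Hfun_lip hmeas hM hx hy) hHi hε
  have hFeas : Feas xq μl μu σl σu wq :=
    ⟨hwqnn, hwsum, by rw [hmom1]; exact h1l, by rw [hmom1]; exact h1u,
      by rw [hmom2]; exact h2l, by rw [hmom2]; exact h2u⟩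
  obtain ⟨w', hw'Feas, hw'obj, hw'card⟩ :=
    lp_reduce xq (fun i => Hfun a h (xq i)) μl μu σl σu wq hFeas
  obtain ⟨hw'nn, hw'sum, hw'1l, hw'1u, hw'2l, hw'2u⟩ := hw'Feas
  set Q : Measure ℝ := mkMeas N xq w' with hQ
  have hQint : ∀ f : ℝ → ℝ, ∫ y, f y ∂Q = ∑ i, w' i * f (xq i) :=
    fun f => integral_mkMeas N xq w' hw'nn f
  refine ⟨Q, ⟨mkMeas_prob N xq w' hw'nn hw'sum, ?_, integrable_mkMeas N xq w' _,
      integrable_mkMeas N xq w' _, ?_, ?_, ?_, ?_⟩, ?_, ?_⟩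
  · exact mkMeas_null N xq w' measurableSet_Iio
      (fun i _ hmem => absurd (Set.mem_Iio.mp hmem) (not_lt.mpr (hxqnn i)))
  · rw [hQint (fun y => y)]; exact hw'1l
  · rw [hQint (fun y => y)]; exact hw'1u
  · rw [hQint (fun y => y ^ 2)]; exact hw'2l
  · rw [hQint (fun y => y ^ 2)]; exact hw'2u
  · refine ⟨Finset.image xq (Finset.univ.filter (fun i => w' i ≠ 0)),
      le_trans Finset.card_image_le hw'card, ?_⟩
    refine mkMeas_null N xq w'
      (Finset.image xq (Finset.univ.filter (fun i => w' i ≠ 0))).finite_toSet.measurableSet.compl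
      (fun i hne hmem => hmem ?_)
    exact Finset.mem_coe.mpr
      (Finset.mem_image_of_mem xq (Finset.mem_filter.mpr ⟨Finset.mem_univ i, hne⟩))
  · rw [hQint (Hfun a h)]
    exact le_trans hval hw'obj

end assembly

end proofs

/-- Proposition: `ÕPT(𝒫⁺)` has the same optimal value as `ÕPT(𝒫₃⁺)`. -/
theorem ROPT_eq_ROPT3
    (a βl βu ηl ηu ν : ℝ)
    (hβl : 0 < βl) (hβ : βl ≤ βu) (hηl : 0 < ηl) (hη : ηl ≤ ηu) (hν : 0 < ν)
    (h : ℝ → ℝ) (hmeas : Measurable h) (hbd : ∃ M, ∀ x, |h x| ≤ M)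
    (μl μu σl σu : ℝ)
    (hμl : μl = ηl / ν) (hμu : μu = ηu / ν) (hσl : σl = 2 * βl / ν) (hσu : σu = 2 * βu / ν) :
    sSup {z : ℝ | ∃ P : Measure ℝ, RMomFeasible μl μu σl σu P ∧
      z = ν * ∫ x, Hfun a h x ∂P} =
    sSup {z : ℝ | ∃ P : Measure ℝ, RMomFeasible μl μu σl σu P ∧ SuppAtMost 3 P ∧
      z = ν * ∫ x, Hfun a h x ∂P} := by
  classical
  obtain ⟨M, hM⟩ := hbd
  have hM0 : 0 ≤ M := hM_nonneg hM
  set A := {z : ℝ | ∃ P : Measure ℝ, RMomFeasible μl μu σl σu P ∧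
      z = ν * ∫ x, Hfun a h x ∂P} with hA
  set B := {z : ℝ | ∃ P : Measure ℝ, RMomFeasible μl μu σl σu P ∧ SuppAtMost 3 P ∧
      z = ν * ∫ x, Hfun a h x ∂P} with hB
  have hBA : B ⊆ A := by
    rintro z ⟨P, hP, _, hz⟩
    exact ⟨P, hP, hz⟩
  -- upper bound for A
  have hub : ∀ z ∈ A, z ≤ ν * (M * σu) := by
    rintro z ⟨P, hP, hz⟩
    obtain ⟨hprob, hnull, hxi, hx2i, h1l, h1u, h2l, h2u⟩ := hP
    have hHi : Integrable (Hfun a h) P := by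
      refine Integrable.mono (hx2i.const_mul M)
        (Hfun_continuous hmeas hM).aestronglyMeasurable (Eventually.of_forall (fun x => ?_))
      rw [Real.norm_eq_abs, Real.norm_eq_abs]
      exact le_trans (Hfun_bound hmeas hM x) (le_abs_self _)
    have h1 : (∫ x, Hfun a h x ∂P) ≤ M * σu := by
      calc (∫ x, Hfun a h x ∂P) ≤ |∫ x, Hfun a h x ∂P| := le_abs_self _
        _ ≤ ∫ x, |Hfun a h x| ∂P := abs_int_le _
        _ ≤ ∫ x, M * x ^ 2 ∂P :=
            integral_mono hHi.abs (hx2i.const_mul M) (fun x => Hfun_bound hmeas hM x)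
        _ = M * ∫ x, x ^ 2 ∂P := integral_const_mul _ _
        _ ≤ M * σu := mul_le_mul_of_nonneg_left h2u hM0
    rw [hz]
    exact mul_le_mul_of_nonneg_left h1 hν.le
  have hbddA : BddAbove A := ⟨ν * (M * σu), hub⟩
  have hbddB : BddAbove B := hbddA.mono hBA
  -- key approximation
  have key : ∀ P : Measure ℝ, RMomFeasible μl μu σl σu P → ∀ ε : ℝ, 0 < ε →
      ∃ zb ∈ B, ν * (∫ x, Hfun a h x ∂P) - ε ≤ zb := by
    intro P hP ε hε
    obtain ⟨Q, hQfeas, hQsupp, hQval⟩ := three_point_approx (a := a) hmeas hM hP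
      (ε := ε / ν) (by positivity)
    refine ⟨ν * ∫ x, Hfun a h x ∂Q, ⟨Q, hQfeas, hQsupp, rfl⟩, ?_⟩
    have := mul_le_mul_of_nonneg_left hQval hν.le
    have hνε : ν * ((∫ x, Hfun a h x ∂P) - ε / ν) = ν * (∫ x, Hfun a h x ∂P) - ε := by
      field_simp
    linarith [this, hνε.symm.le]
  by_cases hAne : A.Nonempty
  · have hBne : B.Nonempty := by
      obtain ⟨z, P, hP, hz⟩ := hAne
      obtain ⟨zb, hzb, _⟩ := key P hP 1 one_pos
      exact ⟨zb, hzb⟩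
    refine le_antisymm ?_ (csSup_le_csSup hbddA hBne hBA)
    refine csSup_le hAne ?_
    rintro z ⟨P, hP, hz⟩
    have hz' : ∀ ε : ℝ, 0 < ε → z - ε ≤ sSup B := by
      intro ε hε
      obtain ⟨zb, hzbB, hzb⟩ := key P hP ε hε
      have := le_csSup hbddB hzbB
      rw [hz]
      linarith
    by_contra hcon
    push_neg at hcon
    have := hz' ((z - sSup B) / 2) (by linarith)
    linarith
  · have hA0 : A = ∅ := Set.not_nonempty_iff_eq_empty.mp hAne
    have hB0 : B = ∅ := Set.eq_empty_of_subset_empty (hA0 ▸ hBA)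
    rw [hA0, hB0]
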